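/- arXiv:2212.08342 — 3 statements merged into one kernel-verified Lean document; each statement's English description precedes it below -/
import Mathlib

section
/- Let E be a Banach lattice whose dual E' has order continuous norm, and F any Banach lattice. Then every weak Banach-Saks operator T : E → F is an unbounded Banach-Saks operator. -/
open Filter Topology MeasureTheory

section Defs

variable {E F G : Type*} [NormedAddCommGroup E] [Lattice E] [IsOrderedAddMonoid E] [HasSolidNorm E] [NormedSpace ℝ E]
  [NormedAddCommGroup F] [Lattice F] [IsOrderedAddMonoid F] [HasSolidNorm F] [NormedSpace ℝ F]
  [NormedAddCommGroup G] [Lattice G] [IsOrderedAddMonoid G] [HasSolidNorm G] [NormedSpace ℝ G]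

/-- Norm bounded sequence in a normed space. -/
def NormBounded {X : Type*} [SeminormedAddCommGroup X] (x : ℕ → X) : Prop :=
  ∃ C : ℝ, ∀ n, ‖x n‖ ≤ C

/-- A weakly null sequence. -/
def WeaklyNull (x : ℕ → E) : Prop :=
  ∀ f : E →L[ℝ] ℝ, Tendsto (fun n => f (x n)) atTop (𝓝 0)

/-- A uaw-null sequence: `|x n| ⊓ u` is weakly null for every positive `u`. -/
def UawNull (x : ℕ → E) : Prop :=
  ∀ u : E, 0 ≤ u → WeaklyNull (fun n => |x n| ⊓ u)

/-- A pairwise disjoint sequence. -/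
def DisjointSeq (x : ℕ → E) : Prop := ∀ m n, m ≠ n → |x m| ⊓ |x n| = 0

/-- The Cesàro means of the sequence converge in norm. -/
def CesaroConvergent (y : ℕ → F) : Prop :=
  ∃ L : F, Tendsto (fun n : ℕ => (n : ℝ)⁻¹ • ∑ k ∈ Finset.range n, y k) atTop (𝓝 L)

/-- Some subsequence has norm-convergent Cesàro means. -/
def HasCesaroConvSubseq (y : ℕ → F) : Prop :=
  ∃ φ : ℕ → ℕ, StrictMono φ ∧ CesaroConvergent (y ∘ φ)

/-- Unbounded Banach-Saks operator: every norm bounded uaw-null sequence is mapped to a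
sequence having a subsequence with norm-convergent Cesàro means. -/
def UBSO (T : E →L[ℝ] F) : Prop :=
  ∀ x : ℕ → E, NormBounded x → UawNull x → HasCesaroConvSubseq (fun n => T (x n))

/-- Disjoint Banach-Saks operator. -/
def DBSO (T : E →L[ℝ] F) : Prop :=
  ∀ x : ℕ → E, NormBounded x → DisjointSeq x → HasCesaroConvSubseq (fun n => T (x n))

/-- Weak Banach-Saks operator. -/
def WBSO (T : E →L[ℝ] F) : Prop :=
  ∀ x : ℕ → E, WeaklyNull x → HasCesaroConvSubseq (fun n => T (x n))

/-- Disjoint weak Banach-Saks operator. -/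
def DWBSO (T : E →L[ℝ] F) : Prop :=
  ∀ x : ℕ → E, DisjointSeq x → WeaklyNull x → HasCesaroConvSubseq (fun n => T (x n))

/-- Banach-Saks operator. -/
def BSO (T : E →L[ℝ] F) : Prop :=
  ∀ x : ℕ → E, NormBounded x → HasCesaroConvSubseq (fun n => T (x n))

/-- Order continuous norm: every decreasing net with infimum `0` converges to `0` in norm. -/
def HasOrderContinuousNorm (E : Type*) [NormedAddCommGroup E] [Lattice E] [IsOrderedAddMonoid E] [HasSolidNorm E] : Prop :=
  ∀ (ι : Type) (_ : Preorder ι) (_ : IsDirected ι (· ≤ ·)) (_ : Nonempty ι)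
    (x : ι → E), Antitone x → IsGLB (Set.range x) 0 →
      Tendsto (fun i => ‖x i‖) atTop (𝓝 0)

/-- The canonical (pointwise-on-positive-vectors) order on the dual. -/
def DualLE (f g : E →L[ℝ] ℝ) : Prop := ∀ x : E, 0 ≤ x → f x ≤ g x

/-- The dual norm is order continuous: every net of functionals that is decreasing with
infimum `0` (with respect to the canonical order on the dual) converges to `0` in norm. -/
def DualHasOrderContinuousNorm (E : Type*) [NormedAddCommGroup E] [Lattice E] [IsOrderedAddMonoid E] [HasSolidNorm E]
    [NormedSpace ℝ E] : Prop :=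
  ∀ (ι : Type) (_ : Preorder ι) (_ : IsDirected ι (· ≤ ·)) (_ : Nonempty ι)
    (f : ι → E →L[ℝ] ℝ),
    (∀ i j, i ≤ j → DualLE (f j) (f i)) →
    (∀ i, DualLE 0 (f i)) →
    (∀ g : E →L[ℝ] ℝ, (∀ i, DualLE g (f i)) → DualLE g 0) →
    Tendsto (fun i => ‖f i‖) atTop (𝓝 0)

/-- σ-order completeness: every countable order bounded family has a supremum. -/
def SigmaOrderComplete (E : Type*) [NormedAddCommGroup E] [Lattice E] [IsOrderedAddMonoid E] [HasSolidNorm E] : Prop :=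
  ∀ x : ℕ → E, BddAbove (Set.range x) → ∃ s, IsLUB (Set.range x) s

/-- weak*-null sequence of functionals. -/
def WeakStarNull (f : ℕ → E →L[ℝ] ℝ) : Prop :=
  ∀ x : E, Tendsto (fun n => f n x) atTop (𝓝 0)

/-- Weakly null sequence in the dual space. -/
def DualWeaklyNull (f : ℕ → E →L[ℝ] ℝ) : Prop :=
  ∀ Φ : (E →L[ℝ] ℝ) →L[ℝ] ℝ, Tendsto (fun n => Φ (f n)) atTop (𝓝 0)

/-- A positive functional. -/
def PositiveFunctional (f : E →L[ℝ] ℝ) : Prop := ∀ x : E, 0 ≤ x → 0 ≤ f x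

/-- `absApply f y` is the value `|f|(y)` of the modulus of `f` at `y ≥ 0`,
via the Riesz-Kantorovich formula. -/
noncomputable def absApply (f : E →L[ℝ] ℝ) (y : E) : ℝ :=
  sSup ((fun z => f z) '' {z : E | -y ≤ z ∧ z ≤ y})

/-- `infModApply f g x` is the value `(|f| ⊓ g)(x)` at `x ≥ 0`,
via the Riesz-Kantorovich formula. -/
noncomputable def infModApply (f g : E →L[ℝ] ℝ) (x : E) : ℝ :=
  sInf {r : ℝ | ∃ y : E, 0 ≤ y ∧ y ≤ x ∧ r = absApply f y + g (x - y)}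

/-- uaw*-null sequence of functionals: `|f n| ⊓ g → 0` in the weak* topology for every
positive functional `g`. -/
def UawStarNull (f : ℕ → E →L[ℝ] ℝ) : Prop :=
  ∀ g : E →L[ℝ] ℝ, PositiveFunctional g →
    ∀ x : E, 0 ≤ x → Tendsto (fun n => infModApply (f n) g x) atTop (𝓝 0)

/-- The Grothendieck property: weak*-null sequences in the dual are weakly null. -/
def GrothendieckProp (X : Type*) [NormedAddCommGroup X] [NormedSpace ℝ X] : Prop :=
  ∀ f : ℕ → X →L[ℝ] ℝ, (∀ x : X, Tendsto (fun n => f n x) atTop (𝓝 0)) →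
    ∀ Φ : (X →L[ℝ] ℝ) →L[ℝ] ℝ, Tendsto (fun n => Φ (f n)) atTop (𝓝 0)

/-- The unbounded Grothendieck property: norm bounded uaw*-null sequences in the dual
are weakly null. -/
def UnboundedGrothendieckProp (F : Type*) [NormedAddCommGroup F] [Lattice F] [IsOrderedAddMonoid F] [HasSolidNorm F]
    [NormedSpace ℝ F] : Prop :=
  ∀ f : ℕ → F →L[ℝ] ℝ, NormBounded f → UawStarNull f → DualWeaklyNull f

/-- Grothendieck operator: the adjoint maps norm bounded weak*-null sequences to weakly
null sequences. -/
def GO (T : E →L[ℝ] F) : Prop :=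
  ∀ f : ℕ → F →L[ℝ] ℝ, NormBounded f → WeakStarNull f →
    DualWeaklyNull (fun n => (f n).comp T)

/-- Unbounded Grothendieck operator: the adjoint maps norm bounded uaw*-null sequences to
weakly null sequences. -/
def UGO (T : E →L[ℝ] F) : Prop :=
  ∀ f : ℕ → F →L[ℝ] ℝ, NormBounded f → UawStarNull f →
    DualWeaklyNull (fun n => (f n).comp T)

/-- A positive interval preserving operator: `S [0, x] = [0, S x]` for all `x ≥ 0`. -/
def IntervalPreserving (S : F →L[ℝ] G) : Prop :=
  (∀ x : F, 0 ≤ x → 0 ≤ S x) ∧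
    ∀ x : F, 0 ≤ x → S '' Set.Icc 0 x = Set.Icc 0 (S x)

end Defs

/-- The Banach lattice `ℓ¹`. -/
noncomputable abbrev ellOne : Type := MeasureTheory.Lp (α := ℕ) ℝ 1 MeasureTheory.Measure.count

/-- The Banach lattice `ℓ∞`. -/
noncomputable abbrev ellInfty : Type := MeasureTheory.Lp (α := ℕ) ℝ ⊤ MeasureTheory.Measure.count


section AuxWbso

set_option linter.unusedSectionVars false
set_option maxHeartbeats 1000000

namespace WbsoAux

variable {E : Type*} [NormedAddCommGroup E] [Lattice E] [IsOrderedAddMonoid E] [HasSolidNorm E] [NormedSpace ℝ E]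

lemma inf_add_le' {a b c : E} (ha : 0 ≤ a) (hb : 0 ≤ b) (hc : 0 ≤ c) :
    a ⊓ (b + c) ≤ a ⊓ b + a ⊓ c := by
  have h1 : a ⊓ (b + c) ≤ a ⊓ b + c := by
    have : a ⊓ (b + c) ≤ (a + c) ⊓ (b + c) :=
      inf_le_inf (le_add_of_nonneg_right hc) le_rfl
    rwa [← inf_add] at this
  have h2 : a ⊓ (b + c) - a ⊓ b ≤ c := sub_le_iff_le_add.2 (h1.trans_eq (add_comm _ _))
  have h3 : a ⊓ (b + c) - a ⊓ b ≤ a :=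
    sub_le_iff_le_add.2 ((inf_le_left).trans (le_add_of_nonneg_right (le_inf ha hb)))
  calc a ⊓ (b + c) = (a ⊓ (b + c) - a ⊓ b) + a ⊓ b := by abel
    _ ≤ a ⊓ c + a ⊓ b := add_le_add_left (le_inf h3 h2) _
    _ = a ⊓ b + a ⊓ c := add_comm _ _

lemma inf_nsmul_le' {u v : E} (hu : 0 ≤ u) (hv : 0 ≤ v) : ∀ n : ℕ, u ⊓ (n • v) ≤ n • (u ⊓ v)
  | 0 => by simpa using inf_le_right
  | (n+1) => by
    calc u ⊓ ((n+1) • v) = u ⊓ (n • v + v) := by rw [succ_nsmul]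
      _ ≤ u ⊓ (n • v) + u ⊓ v := inf_add_le' hu (nsmul_nonneg hv n) hv
      _ ≤ n • (u ⊓ v) + u ⊓ v := add_le_add_left (inf_nsmul_le' hu hv n) _
      _ = (n+1) • (u ⊓ v) := (succ_nsmul _ n).symm

lemma nonneg_of_nsmul_nonneg {n : ℕ} (hn : 0 < n) {a : E} (h : 0 ≤ n • a) : 0 ≤ a := by
  have hsub : n • a⁺ - n • a⁻ = n • a := by rw [← smul_sub, posPart_sub_negPart]
  have h1 : n • a⁻ ≤ n • a⁺ := sub_nonneg.1 (hsub ▸ h)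
  have h2 : a⁻ ≤ n • a⁺ := le_trans (by simpa using nsmul_le_nsmul_left (negPart_nonneg a) hn) h1
  have h3 : a⁻ ≤ n • (a⁻ ⊓ a⁺) := by
    have : a⁻ ⊓ (n • a⁺) = a⁻ := inf_eq_left.2 h2
    calc a⁻ = a⁻ ⊓ (n • a⁺) := this.symm
      _ ≤ n • (a⁻ ⊓ a⁺) := inf_nsmul_le' (negPart_nonneg a) (posPart_nonneg a) n
  rw [inf_comm, posPart_inf_negPart_eq_zero, smul_zero] at h3
  have hneg : a⁻ = 0 := le_antisymm h3 (negPart_nonneg a)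
  have := posPart_sub_negPart a
  rw [hneg, sub_zero] at this
  rw [← this]
  exact posPart_nonneg a

lemma rat_smul_nonneg {q : ℚ} (hq : 0 ≤ q) {a : E} (ha : 0 ≤ a) : 0 ≤ (q:ℝ) • a := by
  apply nonneg_of_nsmul_nonneg q.pos
  have key : (q.den : ℕ) • ((q:ℝ) • a) = (q.num.toNat : ℕ) • a := by
    rw [← Nat.cast_smul_eq_nsmul (R := ℝ), ← Nat.cast_smul_eq_nsmul (R := ℝ), smul_smul]
    congr 1
    have h1 : ((q.den:ℚ) * q : ℚ) = (q.num : ℚ) := Rat.den_mul_eq_num q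
    have h2 : ((q.den:ℝ) * (q:ℝ)) = ((q.num : ℤ) : ℝ) := by
      exact_mod_cast congrArg (fun r : ℚ => (r : ℝ)) h1
    rw [h2]
    norm_cast
    exact (Int.toNat_of_nonneg (Rat.num_nonneg.2 hq)).symm
  rw [key]
  exact nsmul_nonneg ha _

lemma smul_nonneg' {c : ℝ} (hc : 0 ≤ c) {a : E} (ha : 0 ≤ a) : 0 ≤ c • a := by
  have key : ∀ k : ℕ, ∃ q : ℚ, 0 ≤ q ∧ |c - (q:ℝ)| ≤ 1/(k+1) := by
    intro k
    obtain ⟨q, hq⟩ := exists_rat_near c (by positivity : (0:ℝ) < 1/(k+1))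
    refine ⟨max q 0, le_max_right _ _, ?_⟩
    rcases le_total q 0 with h | h
    · rw [max_eq_right h]
      push_cast
      rw [sub_zero, abs_of_nonneg hc]
      have : c - (q:ℝ) ≤ |c - q| := le_abs_self _
      have hq' : (q:ℝ) ≤ 0 := by exact_mod_cast h
      linarith [hq.le]
    · rw [max_eq_left h]; exact hq.le
  choose q hq0 hqc using key
  have ht0 : Tendsto (fun k : ℕ => c - ((q k : ℚ) : ℝ)) atTop (𝓝 0) :=
    squeeze_zero_norm (fun k => hqc k) tendsto_one_div_add_atTop_nhds_zero_nat
  have ht : Tendsto (fun k : ℕ => ((q k : ℚ) : ℝ)) atTop (𝓝 c) := by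
    have := (tendsto_const_nhds (x := c) (f := atTop (α := ℕ))).sub ht0
    simpa using this
  have hts : Tendsto (fun k : ℕ => ((q k : ℚ) : ℝ) • a) atTop (𝓝 (c • a)) := ht.smul_const a
  exact isClosed_nonneg.mem_of_tendsto hts
    (Filter.Eventually.of_forall fun k => rat_smul_nonneg (hq0 k) ha)

lemma smul_le_smul_vec {c : ℝ} (hc : 0 ≤ c) {a b : E} (h : a ≤ b) : c • a ≤ c • b := by
  have := smul_nonneg' hc (sub_nonneg.2 h)
  rw [smul_sub] at this
  exact sub_nonneg.1 this

lemma smul_le_smul_coef {c d : ℝ} (h : c ≤ d) {a : E} (ha : 0 ≤ a) : c • a ≤ d • a := by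
  have := smul_nonneg' (sub_nonneg.2 h) ha
  rw [sub_smul] at this
  exact sub_nonneg.1 this

lemma le_smul_self' {c : ℝ} (hc : 1 ≤ c) {a : E} (ha : 0 ≤ a) : a ≤ c • a := by
  simpa using smul_le_smul_coef hc ha

lemma smul_inf' {c : ℝ} (hc : 0 < c) (a b : E) : c • (a ⊓ b) = (c • a) ⊓ (c • b) := by
  apply le_antisymm
  · exact le_inf (smul_le_smul_vec hc.le inf_le_left) (smul_le_smul_vec hc.le inf_le_right)
  · have h1 : c⁻¹ • ((c • a) ⊓ (c • b)) ≤ a := by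
      have := smul_le_smul_vec (inv_nonneg.2 hc.le) (inf_le_left : (c • a) ⊓ (c • b) ≤ c • a)
      rwa [smul_smul, inv_mul_cancel₀ hc.ne', one_smul] at this
    have h2 : c⁻¹ • ((c • a) ⊓ (c • b)) ≤ b := by
      have := smul_le_smul_vec (inv_nonneg.2 hc.le) (inf_le_right : (c • a) ⊓ (c • b) ≤ c • b)
      rwa [smul_smul, inv_mul_cancel₀ hc.ne', one_smul] at this
    have := smul_le_smul_vec hc.le (le_inf h1 h2)
    rwa [smul_smul, mul_inv_cancel₀ hc.ne', one_smul] at this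

lemma smul_sup' {c : ℝ} (hc : 0 < c) (a b : E) : c • (a ⊔ b) = (c • a) ⊔ (c • b) := by
  apply le_antisymm
  · have h1 : a ≤ c⁻¹ • ((c • a) ⊔ (c • b)) := by
      have := smul_le_smul_vec (inv_nonneg.2 hc.le) (le_sup_left : c • a ≤ (c • a) ⊔ (c • b))
      rwa [smul_smul, inv_mul_cancel₀ hc.ne', one_smul] at this
    have h2 : b ≤ c⁻¹ • ((c • a) ⊔ (c • b)) := by
      have := smul_le_smul_vec (inv_nonneg.2 hc.le) (le_sup_right : c • b ≤ (c • a) ⊔ (c • b))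
      rwa [smul_smul, inv_mul_cancel₀ hc.ne', one_smul] at this
    have := smul_le_smul_vec hc.le (sup_le h1 h2)
    rwa [smul_smul, mul_inv_cancel₀ hc.ne', one_smul] at this
  · exact sup_le (smul_le_smul_vec hc.le le_sup_left) (smul_le_smul_vec hc.le le_sup_right)

lemma smul_posPart' {c : ℝ} (hc : 0 < c) (a : E) : c • a⁺ = (c • a)⁺ := by
  rw [posPart_def, posPart_def, smul_sup' hc, smul_zero]

lemma pf_mono {g : E →L[ℝ] ℝ} (hg : ∀ v : E, 0 ≤ v → 0 ≤ g v) {a b : E} (h : a ≤ b) :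
    g a ≤ g b := by
  have := hg (b - a) (sub_nonneg.2 h)
  rw [map_sub] at this
  linarith


lemma extendPos (p : E → ℝ) (C : ℝ)
    (hadd : ∀ x y : E, 0 ≤ x → 0 ≤ y → p (x + y) = p x + p y)
    (hbd : ∀ x : E, 0 ≤ x → |p x| ≤ C * ‖x‖) :
    ∃ P : E →L[ℝ] ℝ, ∀ x : E, 0 ≤ x → P x = p x := by
  have hp0 : p 0 = 0 := by
    have := hadd 0 0 le_rfl le_rfl
    simp only [add_zero] at this
    linarith
  set q : E → ℝ := fun x => p x⁺ - p x⁻ with hq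
  have hqadd : ∀ x y : E, q (x + y) = q x + q y := by
    intro x y
    have key : (x+y)⁺ + (x⁻ + y⁻) = (x+y)⁻ + (x⁺ + y⁺) := by
      have h1 := posPart_sub_negPart (x+y)
      have h2 := posPart_sub_negPart x
      have h3 := posPart_sub_negPart y
      have e1 := eq_add_of_sub_eq h1
      have e2 := eq_add_of_sub_eq h2
      have e3 := eq_add_of_sub_eq h3
      rw [e1, e2, e3]; abel
    have l1 : p ((x+y)⁺ + (x⁻ + y⁻)) = p (x+y)⁺ + (p x⁻ + p y⁻) := by
      rw [hadd _ _ (posPart_nonneg _) (add_nonneg (negPart_nonneg _) (negPart_nonneg _)),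
        hadd _ _ (negPart_nonneg _) (negPart_nonneg _)]
    have l2 : p ((x+y)⁻ + (x⁺ + y⁺)) = p (x+y)⁻ + (p x⁺ + p y⁺) := by
      rw [hadd _ _ (negPart_nonneg _) (add_nonneg (posPart_nonneg _) (posPart_nonneg _)),
        hadd _ _ (posPart_nonneg _) (posPart_nonneg _)]
    have := congrArg p key
    rw [l1, l2] at this
    simp only [hq]
    linarith
  have hq0 : q 0 = 0 := by simp [hq, posPart_def, negPart_def, hp0]
  have hqbound : ∀ x : E, |q x| ≤ (|C| + |C|) * ‖x‖ := by
    intro x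
    have b1 := hbd x⁺ (posPart_nonneg x)
    have b2 := hbd x⁻ (negPart_nonneg x)
    have habs : |x⁺| ≤ |x| := by
      rw [abs_of_nonneg (posPart_nonneg x), ← posPart_add_negPart x]
      exact le_add_of_nonneg_right (negPart_nonneg x)
    have habs' : |x⁻| ≤ |x| := by
      rw [abs_of_nonneg (negPart_nonneg x), ← posPart_add_negPart x]
      exact le_add_of_nonneg_left (posPart_nonneg x)
    have n1 : ‖x⁺‖ ≤ ‖x‖ := norm_le_norm_of_abs_le_abs habs
    have n2 : ‖x⁻‖ ≤ ‖x‖ := norm_le_norm_of_abs_le_abs habs'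
    have hCabs : C ≤ |C| := le_abs_self C
    have hnn : (0:ℝ) ≤ ‖x⁺‖ := norm_nonneg _
    have hnn' : (0:ℝ) ≤ ‖x⁻‖ := norm_nonneg _
    have hCnn : (0:ℝ) ≤ |C| := abs_nonneg C
    calc |q x| ≤ |p x⁺| + |p x⁻| := abs_sub _ _
      _ ≤ C * ‖x⁺‖ + C * ‖x⁻‖ := add_le_add b1 b2
      _ ≤ |C| * ‖x‖ + |C| * ‖x‖ := by nlinarith
      _ = (|C| + |C|) * ‖x‖ := by ring
  have hqcont : Continuous q := by
    have hlip : ∀ x y : E, |q x - q y| ≤ (|C| + |C|) * ‖x - y‖ := by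
      intro x y
      have : q x = q (x - y) + q y := by
        rw [← hqadd]; congr 1; abel
      rw [this]
      simpa using hqbound (x - y)
    rw [Metric.continuous_iff]
    intro x ε hε
    rcases le_or_gt (|C| + |C|) 0 with hC | hC
    · refine ⟨1, one_pos, fun y _ => ?_⟩
      have h := hlip y x
      have : |q y - q x| ≤ 0 :=
        h.trans (mul_nonpos_of_nonpos_of_nonneg hC (norm_nonneg _))
      rw [Real.dist_eq]
      have := abs_nonneg (q y - q x)
      linarith
    · refine ⟨ε / (|C| + |C|), by positivity, fun y hy => ?_⟩
      rw [Real.dist_eq]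
      calc |q y - q x| ≤ (|C| + |C|) * ‖y - x‖ := hlip y x
        _ < (|C| + |C|) * (ε / (|C| + |C|)) := by
            apply mul_lt_mul_of_pos_left _ hC
            rwa [dist_eq_norm] at hy
        _ = ε := by field_simp; exact div_self (by linarith : (0:ℝ) < |C|).ne'
  let Q : E →+ ℝ := AddMonoidHom.mk' q hqadd
  refine ⟨Q.toRealLinearMap hqcont, fun x hx => ?_⟩
  have : (Q.toRealLinearMap hqcont) x = q x := by
    rfl
  rw [this, hq]
  simp [posPart_of_nonneg hx, negPart_of_nonneg hx, hp0]


lemma exists_posPartFun (f : E →L[ℝ] ℝ) :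
    ∃ P : E →L[ℝ] ℝ, (∀ x : E, 0 ≤ x → 0 ≤ P x) ∧ (∀ x : E, 0 ≤ x → f x ≤ P x) := by
  set p : E → ℝ := fun x => sSup ((fun z => f z) '' Set.Icc 0 x) with hp
  have hne : ∀ x : E, 0 ≤ x → ((fun z => f z) '' Set.Icc 0 x).Nonempty :=
    fun x hx => ⟨f 0, ⟨0, ⟨le_rfl, hx⟩, rfl⟩⟩
  have hubd : ∀ x : E, 0 ≤ x → ∀ r ∈ (fun z => f z) '' Set.Icc 0 x, r ≤ ‖f‖ * ‖x‖ := by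
    rintro x hx r ⟨z, ⟨hz0, hzx⟩, rfl⟩
    have h1 : f z ≤ |f z| := le_abs_self _
    have h2 : |f z| ≤ ‖f‖ * ‖z‖ := by
      have := f.le_opNorm z
      rwa [Real.norm_eq_abs] at this
    have h3 : ‖z‖ ≤ ‖x‖ := norm_le_norm_of_abs_le_abs
      (by rw [abs_of_nonneg hz0, abs_of_nonneg (hz0.trans hzx)]; exact hzx)
    have := mul_le_mul_of_nonneg_left h3 (norm_nonneg f)
    linarith
  have hub : ∀ x : E, 0 ≤ x → BddAbove ((fun z => f z) '' Set.Icc 0 x) :=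
    fun x hx => ⟨‖f‖ * ‖x‖, fun r hr => hubd x hx r hr⟩
  have hmem : ∀ x : E, 0 ≤ x → ∀ z : E, 0 ≤ z → z ≤ x → f z ≤ p x :=
    fun x hx z hz0 hzx => le_csSup (hub x hx) ⟨z, ⟨hz0, hzx⟩, rfl⟩
  have h0le : ∀ x : E, 0 ≤ x → 0 ≤ p x := by
    intro x hx
    have := hmem x hx 0 le_rfl hx
    simpa using this
  have hadd : ∀ x y : E, 0 ≤ x → 0 ≤ y → p (x + y) = p x + p y := by
    intro x y hx hy
    apply le_antisymm
    · apply csSup_le (hne _ (add_nonneg hx hy))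
      rintro r ⟨z, ⟨hz0, hzxy⟩, rfl⟩
      have hz1 : f (z ⊓ x) ≤ p x := hmem x hx _ (le_inf hz0 hx) inf_le_right
      have hz2 : f (z - z ⊓ x) ≤ p y := by
        apply hmem y hy
        · exact sub_nonneg.2 inf_le_left
        · have he : z - z ⊓ x = (z - x)⁺ := by
            rw [sub_inf, sub_self, posPart_def, sup_comm]
          rw [he]
          have hzx : z - x ≤ y := sub_le_iff_le_add.2 (hzxy.trans_eq (add_comm x y))
          calc (z - x)⁺ ≤ y⁺ := posPart_mono hzx
            _ = y := posPart_of_nonneg hy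
      have : f z = f (z ⊓ x) + f (z - z ⊓ x) := by
        rw [← map_add]
        congr 1
        abel
      show f z ≤ p x + p y
      rw [this]
      exact add_le_add hz1 hz2
    · have hx' : p x ≤ p (x + y) - p y := by
        apply csSup_le (hne x hx)
        rintro r ⟨z1, hz1, rfl⟩
        show f z1 ≤ _
        have key : p y ≤ p (x + y) - f z1 := by
          apply csSup_le (hne y hy)
          rintro r2 ⟨z2, hz2, rfl⟩
          show f z2 ≤ _
          have : f z1 + f z2 ≤ p (x + y) := by
            rw [← map_add]
            exact hmem _ (add_nonneg hx hy) _ (add_nonneg hz1.1 hz2.1) (add_le_add hz1.2 hz2.2)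
          linarith
        linarith
      linarith
  have hbd : ∀ x : E, 0 ≤ x → |p x| ≤ ‖f‖ * ‖x‖ := by
    intro x hx
    rw [abs_of_nonneg (h0le x hx)]
    exact csSup_le (hne x hx) (hubd x hx)
  obtain ⟨P, hP⟩ := extendPos p ‖f‖ hadd hbd
  exact ⟨P, fun x hx => by rw [hP x hx]; exact h0le x hx,
    fun x hx => by rw [hP x hx]; exact hmem x hx x hx le_rfl⟩

lemma weaklyNull_of_pos {x : ℕ → E}
    (h : ∀ g : E →L[ℝ] ℝ, (∀ v : E, 0 ≤ v → 0 ≤ g v) →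
      Tendsto (fun n => g |x n|) atTop (𝓝 0)) :
    ∀ f : E →L[ℝ] ℝ, Tendsto (fun n => f (x n)) atTop (𝓝 0) := by
  intro f
  obtain ⟨P, hP0, hPf⟩ := exists_posPartFun f
  have hN0 : ∀ v : E, 0 ≤ v → 0 ≤ (P - f) v := fun v hv => by
    rw [ContinuousLinearMap.sub_apply]
    linarith [hPf v hv]
  have key : ∀ g : E →L[ℝ] ℝ, (∀ v : E, 0 ≤ v → 0 ≤ g v) →
      Tendsto (fun n => g (x n)) atTop (𝓝 0) := by
    intro g hg
    apply squeeze_zero_norm (a := fun n => g |x n|) ?_ (h g hg)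
    intro n
    rw [Real.norm_eq_abs, abs_le]
    constructor
    · have h1 : (0:E) ≤ x n + |x n| := by
        simpa using add_le_add_right (neg_le_abs (x n)) (x n)
      have := hg _ h1
      rw [map_add] at this
      linarith
    · have h1 : (0:E) ≤ |x n| - x n := sub_nonneg.2 (le_abs_self _)
      have := hg _ h1
      rw [map_sub] at this
      linarith
  have t1 := key P hP0
  have t2 := key (P - f) hN0
  have := t1.sub t2
  simp only [ContinuousLinearMap.sub_apply, sub_zero] at this
  convert this using 2 with n
  ring


noncomputable def compVal (g : E →L[ℝ] ℝ) (d x : E) : ℝ :=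
  ⨆ m : ℕ, g (x ⊓ ((m:ℝ) • d))

section compVal
variable {g : E →L[ℝ] ℝ} (hg : ∀ v : E, 0 ≤ v → 0 ≤ g v) {d : E} (hd : 0 ≤ d)

include hg hd

lemma compVal_tendsto (x : E) :
    Tendsto (fun m : ℕ => g (x ⊓ ((m:ℝ) • d))) atTop (𝓝 (compVal g d x)) := by
  apply tendsto_atTop_ciSup
  · intro m m' hmm'
    exact pf_mono hg (inf_le_inf_left x (smul_le_smul_coef (by exact_mod_cast hmm') hd))
  · exact ⟨g x, Set.forall_mem_range.2 fun m => pf_mono hg inf_le_left⟩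

lemma compVal_nonneg {x : E} (hx : 0 ≤ x) : 0 ≤ compVal g d x :=
  ge_of_tendsto' (compVal_tendsto hg hd x)
    (fun m => hg _ (le_inf hx (smul_nonneg' (by positivity) hd)))

lemma compVal_le (x : E) : compVal g d x ≤ g x :=
  le_of_tendsto (compVal_tendsto hg hd x)
    (Filter.Eventually.of_forall fun m => pf_mono hg inf_le_left)

lemma compVal_add {x y : E} (hx : 0 ≤ x) (hy : 0 ≤ y) :
    compVal g d (x + y) = compVal g d x + compVal g d y := by
  have hA := compVal_tendsto hg hd x
  have hB := compVal_tendsto hg hd y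
  have hC := compVal_tendsto hg hd (x + y)
  apply le_antisymm
  · apply le_of_tendsto_of_tendsto' hC (hA.add hB)
    intro m
    have hsplit : (x + y) ⊓ ((m:ℝ) • d) ≤ x ⊓ ((m:ℝ) • d) + y ⊓ ((m:ℝ) • d) := by
      have hmd : (0:E) ≤ (m:ℝ) • d := smul_nonneg' (by positivity) hd
      calc (x + y) ⊓ ((m:ℝ) • d) = ((m:ℝ) • d) ⊓ (x + y) := inf_comm _ _
        _ ≤ ((m:ℝ) • d) ⊓ x + ((m:ℝ) • d) ⊓ y := inf_add_le' hmd hx hy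
        _ = x ⊓ ((m:ℝ) • d) + y ⊓ ((m:ℝ) • d) := by rw [inf_comm ((m:ℝ) • d) x, inf_comm ((m:ℝ) • d) y]
    calc g ((x + y) ⊓ ((m:ℝ) • d)) ≤ g (x ⊓ ((m:ℝ) • d) + y ⊓ ((m:ℝ) • d)) := pf_mono hg hsplit
      _ = g (x ⊓ ((m:ℝ) • d)) + g (y ⊓ ((m:ℝ) • d)) := map_add g _ _
  · have h2m : Tendsto (fun m : ℕ => g ((x + y) ⊓ (((2 * m : ℕ):ℝ) • d))) atTop
        (𝓝 (compVal g d (x + y))) :=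
      hC.comp (tendsto_atTop_mono (fun n => (by omega : n ≤ 2 * n)) tendsto_id)
    apply le_of_tendsto_of_tendsto' (hA.add hB) h2m
    intro m
    rw [← map_add]
    apply pf_mono hg
    apply le_inf
    · exact add_le_add inf_le_left inf_le_left
    · calc x ⊓ ((m:ℝ) • d) + y ⊓ ((m:ℝ) • d) ≤ (m:ℝ) • d + (m:ℝ) • d :=
          add_le_add inf_le_right inf_le_right
        _ = ((2 * m : ℕ):ℝ) • d := by
          push_cast
          rw [← add_smul]
          ring_nf
  
lemma compVal_self : compVal g d d = g d := by
  apply tendsto_nhds_unique (compVal_tendsto hg hd d)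
  apply Tendsto.congr' _ (tendsto_const_nhds)
  filter_upwards [eventually_ge_atTop 1] with m hm
  have : d ⊓ ((m:ℝ) • d) = d := inf_eq_left.2 (le_smul_self' (by exact_mod_cast hm) hd)
  rw [this]

lemma compVal_disjoint {x : E} (hx : 0 ≤ x) (hxd : x ⊓ d = 0) : compVal g d x = 0 := by
  have hzero : ∀ m : ℕ, x ⊓ ((m:ℝ) • d) = 0 := by
    intro m
    rcases Nat.eq_zero_or_pos m with hm | hm
    · subst hm; simpa using inf_eq_right.2 hx
    · apply le_antisymm
      · calc x ⊓ ((m:ℝ) • d) ≤ ((m:ℝ) • x) ⊓ ((m:ℝ) • d) :=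
            inf_le_inf (le_smul_self' (by exact_mod_cast hm) hx) le_rfl
          _ = (m:ℝ) • (x ⊓ d) := (smul_inf' (by exact_mod_cast hm) x d).symm
          _ = 0 := by rw [hxd, smul_zero]
      · exact le_inf hx (smul_nonneg' (by positivity) hd)
  have : (fun m : ℕ => g (x ⊓ ((m:ℝ) • d))) = fun _ => 0 := funext fun m => by
    rw [hzero m, map_zero]
  apply tendsto_nhds_unique (compVal_tendsto hg hd x)
  rw [this]
  exact tendsto_const_nhds

end compVal

lemma inf_sum_le {b : E} (hb : 0 ≤ b) (a : ℕ → E) (k : ℕ) (ha : ∀ j, 0 ≤ a j) :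
    b ⊓ (∑ j ∈ Finset.range k, a j) ≤ ∑ j ∈ Finset.range k, b ⊓ a j := by
  induction k with
  | zero => simpa using inf_le_right
  | succ k ih =>
    rw [Finset.sum_range_succ, Finset.sum_range_succ]
    calc b ⊓ (∑ j ∈ Finset.range k, a j + a k)
        ≤ b ⊓ (∑ j ∈ Finset.range k, a j) + b ⊓ a k :=
          inf_add_le' hb (Finset.sum_nonneg fun j _ => ha j) (ha k)
      _ ≤ ∑ j ∈ Finset.range k, b ⊓ a j + b ⊓ a k := add_le_add_left ih _

lemma sum_disjoint_le {x : E} (hx : 0 ≤ x) (e : ℕ → E) (k : ℕ)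
    (h0 : ∀ j, 0 ≤ e j) (hle : ∀ j, e j ≤ x)
    (hd : ∀ i j, i ≠ j → e i ⊓ e j = 0) :
    ∑ j ∈ Finset.range k, e j ≤ x := by
  induction k with
  | zero => simpa using hx
  | succ k ih =>
    have hdisj : e k ⊓ (∑ j ∈ Finset.range k, e j) = 0 := by
      apply le_antisymm
      · calc e k ⊓ (∑ j ∈ Finset.range k, e j) ≤ ∑ j ∈ Finset.range k, e k ⊓ e j :=
            inf_sum_le (h0 k) e k h0
          _ = 0 := Finset.sum_eq_zero fun j hj => hd k j (by simp at hj; omega)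
      · exact le_inf (h0 k) (Finset.sum_nonneg fun j _ => h0 j)
    have hsup : (∑ j ∈ Finset.range k, e j) + e k = (∑ j ∈ Finset.range k, e j) ⊔ e k := by
      have := inf_add_sup (∑ j ∈ Finset.range k, e j) (e k)
      rw [inf_comm, hdisj, zero_add] at this
      exact this.symm
    rw [Finset.sum_range_succ, hsup]
    exact sup_le ih (hle k)


lemma stepA (hE : DualHasOrderContinuousNorm E) (g : E →L[ℝ] ℝ)
    (hg : ∀ v : E, 0 ≤ v → 0 ≤ g v)
    (d : ℕ → E) (hd0 : ∀ k, 0 ≤ d k) (hdisj : ∀ i j, i ≠ j → d i ⊓ d j = 0)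
    (M : ℝ) (hbd : ∀ k, ‖d k‖ ≤ M) :
    Tendsto (fun k => g (d k)) atTop (𝓝 0) := by
  -- extend components to functionals
  have hCex : ∀ j : ℕ, ∃ Cj : E →L[ℝ] ℝ, ∀ x : E, 0 ≤ x → Cj x = compVal g (d j) x := by
    intro j
    apply extendPos _ ‖g‖ (fun x y hx hy => compVal_add hg (hd0 j) hx hy)
    intro x hx
    rw [abs_of_nonneg (compVal_nonneg hg (hd0 j) hx)]
    calc compVal g (d j) x ≤ g x := compVal_le hg (hd0 j) x
      _ ≤ |g x| := le_abs_self _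
      _ ≤ ‖g‖ * ‖x‖ := by have := g.le_opNorm x; rwa [Real.norm_eq_abs] at this
  choose Cf hCf using hCex
  set S : ℕ → (E →L[ℝ] ℝ) := fun k => g - ∑ j ∈ Finset.range k, Cf j with hS
  have hSx : ∀ (k : ℕ) (x : E), S k x = g x - ∑ j ∈ Finset.range k, Cf j x := by
    intro k x
    simp [hS, ContinuousLinearMap.sum_apply]
  have hCfnn : ∀ j (x : E), 0 ≤ x → 0 ≤ Cf j x := fun j x hx => by
    rw [hCf j x hx]; exact compVal_nonneg hg (hd0 j) hx
  have hSpos : ∀ (k : ℕ) (x : E), 0 ≤ x → 0 ≤ S k x := by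
    intro k x hx
    rw [hSx]
    have hsum : ∀ m : ℕ, ∑ j ∈ Finset.range k, g (x ⊓ ((m:ℝ) • d j)) ≤ g x := by
      intro m
      rcases Nat.eq_zero_or_pos m with hm | hm
      · subst hm
        simp only [Nat.cast_zero, zero_smul]
        have : ∀ j ∈ Finset.range k, g (x ⊓ (0:E)) = 0 := fun j _ => by
          rw [inf_eq_right.2 hx, map_zero]
        rw [Finset.sum_congr rfl this, Finset.sum_const, smul_zero]
        exact hg x hx
      · rw [← map_sum]
        apply pf_mono hg
        apply sum_disjoint_le hx _ k
        · exact fun j => le_inf hx (smul_nonneg' (by positivity) (hd0 j))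
        · exact fun j => inf_le_left
        · intro i j hij
          have h1 : x ⊓ ((m:ℝ) • d i) ⊓ (x ⊓ ((m:ℝ) • d j)) ≤ ((m:ℝ) • d i) ⊓ ((m:ℝ) • d j) :=
            inf_le_inf inf_le_right inf_le_right
          have h2 : ((m:ℝ) • d i) ⊓ ((m:ℝ) • d j) = 0 := by
            rw [← smul_inf' (by exact_mod_cast hm), hdisj i j hij, smul_zero]
          apply le_antisymm (h1.trans_eq h2)
          exact le_inf (le_inf hx (smul_nonneg' (by positivity) (hd0 i)))
            (le_inf hx (smul_nonneg' (by positivity) (hd0 j)))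
    have ht : Tendsto (fun m : ℕ => ∑ j ∈ Finset.range k, g (x ⊓ ((m:ℝ) • d j))) atTop
        (𝓝 (∑ j ∈ Finset.range k, compVal g (d j) x)) :=
      tendsto_finset_sum _ (fun j _ => compVal_tendsto hg (hd0 j) x)
    have hle := le_of_tendsto ht (Filter.Eventually.of_forall hsum)
    have hsum_eq : ∑ j ∈ Finset.range k, Cf j x = ∑ j ∈ Finset.range k, compVal g (d j) x :=
      Finset.sum_congr rfl fun j _ => hCf j x hx
    rw [hsum_eq]
    linarith
  have hSmono : ∀ i j : ℕ, i ≤ j → ∀ x : E, 0 ≤ x → S j x ≤ S i x := by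
    intro i j hij x hx
    rw [hSx, hSx]
    have : ∑ l ∈ Finset.range i, Cf l x ≤ ∑ l ∈ Finset.range j, Cf l x :=
      Finset.sum_le_sum_of_subset_of_nonneg (Finset.range_subset_range.2 hij)
        (fun l _ _ => hCfnn l x hx)
    linarith
  set p : E → ℝ := fun x => ⨅ k : ℕ, S k x with hp
  have hbdd : ∀ x : E, 0 ≤ x → BddBelow (Set.range fun k => S k x) :=
    fun x hx => ⟨0, Set.forall_mem_range.2 fun k => hSpos k x hx⟩
  have hptend : ∀ x : E, 0 ≤ x → Tendsto (fun k => S k x) atTop (𝓝 (p x)) :=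
    fun x hx => tendsto_atTop_ciInf (fun i j hij => hSmono i j hij x hx) (hbdd x hx)
  have hple : ∀ (x : E), 0 ≤ x → ∀ k, p x ≤ S k x :=
    fun x hx k => ciInf_le (hbdd x hx) k
  have hpnn : ∀ x : E, 0 ≤ x → 0 ≤ p x :=
    fun x hx => le_ciInf fun k => hSpos k x hx
  have hpadd : ∀ x y : E, 0 ≤ x → 0 ≤ y → p (x + y) = p x + p y := by
    intro x y hx hy
    apply tendsto_nhds_unique (hptend (x + y) (add_nonneg hx hy))
    have heq : (fun k => S k (x + y)) = fun k => S k x + S k y :=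
      funext fun k => map_add (S k) x y
    rw [heq]
    exact (hptend x hx).add (hptend y hy)
  have hpbd : ∀ x : E, 0 ≤ x → |p x| ≤ ‖g‖ * ‖x‖ := by
    intro x hx
    rw [abs_of_nonneg (hpnn x hx)]
    have h1 : p x ≤ S 0 x := hple x hx 0
    have h2 : S 0 x = g x := by rw [hSx]; simp
    have h3 : g x ≤ ‖g‖ * ‖x‖ := by
      have := g.le_opNorm x
      rw [Real.norm_eq_abs] at this
      exact (le_abs_self _).trans this
    linarith
  obtain ⟨Pinf, hPinf⟩ := extendPos p ‖g‖ hpadd hpbd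
  set f : ℕ → (E →L[ℝ] ℝ) := fun k => S k - Pinf with hf
  have hfx : ∀ (k : ℕ) (x : E), 0 ≤ x → f k x = S k x - p x := fun k x hx => by
    rw [hf]; simp [ContinuousLinearMap.sub_apply, hPinf x hx]
  have h1 : ∀ i j : ℕ, i ≤ j → DualLE (f j) (f i) := by
    intro i j hij x hx
    rw [hfx j x hx, hfx i x hx]
    linarith [hSmono i j hij x hx]
  have h2 : ∀ i : ℕ, DualLE 0 (f i) := by
    intro i x hx
    rw [hfx i x hx]
    simp only [ContinuousLinearMap.zero_apply]
    linarith [hple x hx i]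
  have h3 : ∀ φ : E →L[ℝ] ℝ, (∀ i, DualLE φ (f i)) → DualLE φ 0 := by
    intro φ hφ x hx
    simp only [ContinuousLinearMap.zero_apply]
    have ht : Tendsto (fun i => S i x - p x) atTop (𝓝 0) := by
      have := (hptend x hx).sub (tendsto_const_nhds (x := p x))
      simpa using this
    apply ge_of_tendsto ht
    apply Filter.Eventually.of_forall
    intro i
    have := hφ i x hx
    rwa [hfx i x hx] at this
  have hnorm := hE ℕ inferInstance inferInstance inferInstance f h1 h2 h3
  -- conclusion
  apply squeeze_zero_norm (a := fun k => ‖f k‖ * M) _ (by simpa using hnorm.mul_const M)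
  intro k
  have e1 : ∀ j, j < k → Cf j (d k) = 0 := by
    intro j hj
    rw [hCf j _ (hd0 k)]
    exact compVal_disjoint hg (hd0 j) (hd0 k) (hdisj k j (by omega))
  have e2 : p (d k) = 0 := by
    apply le_antisymm _ (hpnn _ (hd0 k))
    have hle : p (d k) ≤ S (k+1) (d k) := hple _ (hd0 k) (k+1)
    have hS1 : S (k+1) (d k) ≤ 0 := by
      rw [hSx]
      have hsum_ge : Cf k (d k) ≤ ∑ j ∈ Finset.range (k+1), Cf j (d k) :=
        Finset.single_le_sum (fun j _ => hCfnn j _ (hd0 k)) (Finset.self_mem_range_succ k)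
      rw [hCf k _ (hd0 k), compVal_self hg (hd0 k)] at hsum_ge
      linarith
    linarith
  have e3 : g (d k) = f k (d k) := by
    rw [hfx k _ (hd0 k), e2, hSx, Finset.sum_eq_zero (fun j hj => e1 j (Finset.mem_range.1 hj))]
    ring
  rw [Real.norm_eq_abs, e3]
  calc |f k (d k)| ≤ ‖f k‖ * ‖d k‖ := by
        have := (f k).le_opNorm (d k)
        rwa [Real.norm_eq_abs] at this
    _ ≤ ‖f k‖ * M := mul_le_mul_of_nonneg_left (hbd k) (norm_nonneg _)


lemma pos_tendsto [CompleteSpace E] (hE : DualHasOrderContinuousNorm E)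
    (g : E →L[ℝ] ℝ) (hg : ∀ v : E, 0 ≤ v → 0 ≤ g v)
    (x : ℕ → E) (M : ℝ) (hM : ∀ n, ‖x n‖ ≤ M)
    (hu : ∀ u : E, 0 ≤ u → Tendsto (fun n => g (|x n| ⊓ u)) atTop (𝓝 0)) :
    Tendsto (fun n => g |x n|) atTop (𝓝 0) := by
  by_contra hcon
  -- extract ε and a subsequence
  have hfreq : ∃ ε > 0, ∃ᶠ n in atTop, ε ≤ g |x n| := by
    rw [Metric.tendsto_atTop] at hcon
    push_neg at hcon
    obtain ⟨ε, hε, hcon⟩ := hcon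
    refine ⟨ε, hε, frequently_atTop.2 fun N => ?_⟩
    obtain ⟨n, hn, hd⟩ := hcon N
    refine ⟨n, hn, ?_⟩
    rw [Real.dist_eq, sub_zero, abs_of_nonneg (hg _ (abs_nonneg _))] at hd
    exact hd
  obtain ⟨ε, hε, hfr⟩ := hfreq
  obtain ⟨φ, hφmono, hφ⟩ := extraction_of_frequently_atTop hfr
  set z : ℕ → E := fun k => |x (φ k)| with hzdef
  have hz0 : ∀ k, 0 ≤ z k := fun k => abs_nonneg _
  have hzM : ∀ k, ‖z k‖ ≤ M := fun k => by
    rw [hzdef]; rw [norm_abs_eq_norm]; exact hM _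
  have hzg : ∀ k, ε ≤ g (z k) := hφ
  have hzu : ∀ u : E, 0 ≤ u → Tendsto (fun k => g (z k ⊓ u)) atTop (𝓝 0) := by
    intro u hu'
    exact (hu u hu').comp hφmono.tendsto_atTop
  have hex : ∀ u : E, 0 ≤ u → ∃ K : ℕ, g (z K ⊓ u) ≤ ε/2 := by
    intro u hu'
    obtain ⟨K, hK⟩ := ((hzu u hu').eventually_lt_const (half_pos hε)).exists
    exact ⟨K, hK.le⟩
  -- recursive construction
  have hstep : ∀ (n : ℕ) (s : {s : E // 0 ≤ s}),
      ∃ K : ℕ, g (z K ⊓ ((8:ℝ)^(n+1) • s.1)) ≤ ε/2 :=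
    fun n s => hex _ (smul_nonneg' (by positivity) s.2)
  let F : ∀ _ : ℕ, ℕ × {s : E // 0 ≤ s} → ℕ × {s : E // 0 ≤ s} := fun n ih =>
    ⟨Classical.choose (hstep n ih.2),
      ⟨ih.2.1 + z (Classical.choose (hstep n ih.2)), add_nonneg ih.2.2 (hz0 _)⟩⟩
  let step : ℕ → ℕ × {s : E // 0 ≤ s} := fun n => Nat.rec ⟨0, ⟨z 0, hz0 0⟩⟩ F n
  have hstep_succ : ∀ n, step (n+1) = F n (step n) := fun n => rfl
  set w : ℕ → E := fun n => z ((step n).1) with hwdef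
  have hw0 : ∀ n, 0 ≤ w n := fun n => hz0 _
  have hwM : ∀ n, ‖w n‖ ≤ M := fun n => hzM _
  have hwg : ∀ n, ε ≤ g (w n) := fun n => hzg _
  have hsumstate : ∀ n, (step n).2.1 = ∑ i ∈ Finset.range (n+1), w i := by
    intro n
    induction n with
    | zero =>
      show z 0 = ∑ i ∈ Finset.range 1, w i
      rw [Finset.sum_range_one]
      rfl
    | succ n ih =>
      have h1 : (step (n+1)).2.1 = (step n).2.1 + z ((step (n+1)).1) := rfl
      rw [h1, Finset.sum_range_succ, ← ih]
  have hsmall : ∀ n, g (w (n+1) ⊓ ((8:ℝ)^(n+1) • (∑ i ∈ Finset.range (n+1), w i))) ≤ ε/2 := by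
    intro n
    have hcs := Classical.choose_spec (hstep n (step n).2)
    have hwz : w (n+1) = z (Classical.choose (hstep n (step n).2)) := rfl
    rw [hwz, ← hsumstate n]
    exact hcs
  -- the dominating element
  have hsummable : Summable (fun n : ℕ => ((1/2:ℝ)^(n+1)) • w n) := by
    apply Summable.of_norm_bounded (g := fun n : ℕ => (M * (1/2)) * (1/2:ℝ)^n)
    · exact (summable_geometric_of_lt_one (by norm_num) (by norm_num)).mul_left _
    · intro n
      rw [norm_smul, Real.norm_eq_abs, abs_of_nonneg (by positivity : (0:ℝ) ≤ (1/2:ℝ)^(n+1))]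
      calc (1/2:ℝ)^(n+1) * ‖w n‖ ≤ (1/2:ℝ)^(n+1) * M := by
            apply mul_le_mul_of_nonneg_left (hwM n) (by positivity)
        _ = (M * (1/2)) * (1/2:ℝ)^n := by ring
  set xhat : E := ∑' n : ℕ, ((1/2:ℝ)^(n+1)) • w n with hxhatdef
  have hxhat0 : 0 ≤ xhat := tsum_nonneg (fun n => smul_nonneg' (by positivity) (hw0 n))
  have hterm_le : ∀ n : ℕ, ((1/2:ℝ)^(n+1)) • w n ≤ xhat :=
    fun n => hsummable.le_tsum n (fun j _ => smul_nonneg' (by positivity) (hw0 j))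
  -- the disjoint sequence
  set y : ℕ → E := fun n =>
    (w (n+1) - (8:ℝ)^(n+1) • (∑ i ∈ Finset.range (n+1), w i) - (1/2:ℝ)^n • xhat)⁺ with hydef
  have hy0 : ∀ n, 0 ≤ y n := fun n => posPart_nonneg _
  have hs0 : ∀ n, (0:E) ≤ ∑ i ∈ Finset.range (n+1), w i :=
    fun n => Finset.sum_nonneg fun i _ => hw0 i
  -- lower bound for g (y n)
  have hgy : ∀ n, ε - ε/2 - (1/2:ℝ)^n * g xhat ≤ g (y n) := by
    intro n
    set v : E := (8:ℝ)^(n+1) • (∑ i ∈ Finset.range (n+1), w i) + (1/2:ℝ)^n • xhat with hvdef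
    have hv1 : (0:E) ≤ (8:ℝ)^(n+1) • (∑ i ∈ Finset.range (n+1), w i) :=
      smul_nonneg' (by positivity) (hs0 n)
    have hv2 : (0:E) ≤ (1/2:ℝ)^n • xhat := smul_nonneg' (by positivity) hxhat0
    have hyeq : y n = w (n+1) - w (n+1) ⊓ v := by
      rw [hydef]
      show (w (n+1) - _ - _)⁺ = _
      rw [sub_sub, ← hvdef, sub_inf, sub_self, posPart_def, sup_comm]
    have hgyeq : g (y n) = g (w (n+1)) - g (w (n+1) ⊓ v) := by
      rw [hyeq, map_sub]
    have hsplit : g (w (n+1) ⊓ v) ≤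
        g (w (n+1) ⊓ ((8:ℝ)^(n+1) • (∑ i ∈ Finset.range (n+1), w i)))
          + g (w (n+1) ⊓ ((1/2:ℝ)^n • xhat)) := by
      have h := inf_add_le' (hw0 (n+1)) hv1 hv2
      calc g (w (n+1) ⊓ v) ≤ g (w (n+1) ⊓ ((8:ℝ)^(n+1) • (∑ i ∈ Finset.range (n+1), w i))
            + w (n+1) ⊓ ((1/2:ℝ)^n • xhat)) := pf_mono hg h
        _ = _ := map_add g _ _
    have h2 : g (w (n+1) ⊓ ((1/2:ℝ)^n • xhat)) ≤ (1/2:ℝ)^n * g xhat := by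
      have := pf_mono hg (inf_le_right : w (n+1) ⊓ ((1/2:ℝ)^n • xhat) ≤ (1/2:ℝ)^n • xhat)
      rwa [g.map_smul, smul_eq_mul] at this
    have h3 := hsmall n
    have h4 := hwg (n+1)
    linarith
  -- disjointness
  have hydisj : ∀ m n : ℕ, m < n → y m ⊓ y n = 0 := by
    intro m n hmn
    set a := w (m+1) with hadef
    set b := w (n+1) with hbdef
    set c : ℝ := (1/2:ℝ)^(m+n+2) with hcdef
    have hc0 : (0:ℝ) < c := by positivity
    have hc1 : c ≤ 1 := pow_le_one₀ (by norm_num) (by norm_num)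
    have ha0 : 0 ≤ a := by rw [hadef]; exact hw0 (m+1)
    have hb0 : 0 ≤ b := by rw [hbdef]; exact hw0 (n+1)
    set u : E := a - c • b with hudef
    have hym : y m ≤ u⁺ := by
      apply posPart_mono
      have h1 : c • b ≤ (1/2:ℝ)^m • xhat := by
        have hb2 : ((1/2:ℝ)^(n+2)) • b ≤ xhat := hterm_le (n+1)
        have := smul_le_smul_vec (show (0:ℝ) ≤ (1/2:ℝ)^m by positivity) hb2
        rw [smul_smul] at this
        have hpow : (1/2:ℝ)^m * (1/2:ℝ)^(n+2) = c := by
          rw [hcdef, ← pow_add]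
          ring_nf
        rwa [hpow] at this
      have hA : (0:E) ≤ (8:ℝ)^(m+1) • (∑ i ∈ Finset.range (m+1), w i) :=
        smul_nonneg' (by positivity) (hs0 m)
      calc w (m+1) - (8:ℝ)^(m+1) • (∑ i ∈ Finset.range (m+1), w i) - (1/2:ℝ)^m • xhat
          ≤ a - (1/2:ℝ)^m • xhat := sub_le_sub_right (sub_le_self a hA) _
        _ ≤ a - c • b := sub_le_sub_left h1 a
    have hcinv : c⁻¹ ≤ (8:ℝ)^(n+1) := by
      have h8 : (8:ℝ)^(n+1) = 2^(3*(n+1)) := by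
        rw [pow_mul]; norm_num
      have hcinv' : c⁻¹ = (2:ℝ)^(m+n+2) := by
        rw [hcdef, one_div, inv_pow, inv_inv]
      rw [hcinv', h8]
      exact pow_le_pow_right₀ (by norm_num) (by omega)
    have hyn2 : y n ≤ c⁻¹ • u⁻ := by
      have ha_le : a ≤ ∑ i ∈ Finset.range (n+1), w i := by
        rw [hadef]
        exact Finset.single_le_sum (f := w) (fun i _ => hw0 i)
          (Finset.mem_range.2 (by omega : m + 1 < n + 1))
      have hstep1 : y n ≤ (b - (8:ℝ)^(n+1) • a)⁺ := by
        apply posPart_mono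
        have h1 : (8:ℝ)^(n+1) • a ≤ (8:ℝ)^(n+1) • (∑ i ∈ Finset.range (n+1), w i) :=
          smul_le_smul_vec (by positivity) ha_le
        have h2 : (0:E) ≤ (1/2:ℝ)^n • xhat := smul_nonneg' (by positivity) hxhat0
        calc w (n+1) - (8:ℝ)^(n+1) • (∑ i ∈ Finset.range (n+1), w i) - (1/2:ℝ)^n • xhat
            ≤ b - (8:ℝ)^(n+1) • (∑ i ∈ Finset.range (n+1), w i) := sub_le_self _ h2
          _ ≤ b - (8:ℝ)^(n+1) • a := sub_le_sub_left h1 b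
      have hmono : b - (8:ℝ)^(n+1) • a ≤ b - c⁻¹ • a :=
        sub_le_sub_left (smul_le_smul_coef hcinv ha0) b
      have key : (b - c⁻¹ • a)⁺ = c⁻¹ • u⁻ := by
        have h1 : b - c⁻¹ • a = c⁻¹ • (c • b - a) := by
          rw [smul_sub, smul_smul, inv_mul_cancel₀ hc0.ne', one_smul]
        rw [h1, ← smul_posPart' (inv_pos.2 hc0)]
        congr 1
        rw [← posPart_neg u, hudef, neg_sub]
      calc y n ≤ (b - (8:ℝ)^(n+1) • a)⁺ := hstep1
        _ ≤ (b - c⁻¹ • a)⁺ := posPart_mono hmono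
        _ = c⁻¹ • u⁻ := key
    have hfin : y m ⊓ y n ≤ u⁺ ⊓ (c⁻¹ • u⁻) := inf_le_inf hym hyn2
    have hcD : c • (u⁺ ⊓ (c⁻¹ • u⁻)) ≤ 0 := by
      have d1 : c • (u⁺ ⊓ (c⁻¹ • u⁻)) ≤ c • u⁺ := smul_le_smul_vec hc0.le inf_le_left
      have d1' : c • u⁺ ≤ u⁺ := by
        have := smul_le_smul_coef hc1 (posPart_nonneg u)
        rwa [one_smul] at this
      have d2 : c • (u⁺ ⊓ (c⁻¹ • u⁻)) ≤ u⁻ := by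
        have := smul_le_smul_vec hc0.le (inf_le_right : u⁺ ⊓ (c⁻¹ • u⁻) ≤ c⁻¹ • u⁻)
        rwa [smul_smul, mul_inv_cancel₀ hc0.ne', one_smul] at this
      have := le_inf (d1.trans d1') d2
      rwa [posPart_inf_negPart_eq_zero] at this
    have hD0 : u⁺ ⊓ (c⁻¹ • u⁻) ≤ 0 := by
      have := smul_le_smul_vec (inv_nonneg.2 hc0.le) hcD
      rwa [smul_smul, inv_mul_cancel₀ hc0.ne', one_smul, smul_zero] at this
    exact le_antisymm (hfin.trans hD0) (le_inf (hy0 m) (hy0 n))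
  -- boundedness
  have hyM : ∀ n, ‖y n‖ ≤ M := by
    intro n
    have h1 : y n ≤ w (n+1) := by
      have harg : w (n+1) - (8:ℝ)^(n+1) • (∑ i ∈ Finset.range (n+1), w i)
          - (1/2:ℝ)^n • xhat ≤ w (n+1) := by
        have hA : (0:E) ≤ (8:ℝ)^(n+1) • (∑ i ∈ Finset.range (n+1), w i) :=
          smul_nonneg' (by positivity) (hs0 n)
        have hB : (0:E) ≤ (1/2:ℝ)^n • xhat := smul_nonneg' (by positivity) hxhat0
        calc w (n+1) - (8:ℝ)^(n+1) • (∑ i ∈ Finset.range (n+1), w i) - (1/2:ℝ)^n • xhat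
            ≤ w (n+1) - (8:ℝ)^(n+1) • (∑ i ∈ Finset.range (n+1), w i) := sub_le_self _ hB
          _ ≤ w (n+1) := sub_le_self _ hA
      calc y n ≤ (w (n+1))⁺ := posPart_mono harg
        _ = w (n+1) := posPart_of_nonneg (hw0 (n+1))
    have habs : |y n| ≤ |w (n+1)| := by
      rw [abs_of_nonneg (hy0 n), abs_of_nonneg (hw0 (n+1))]
      exact h1
    exact (norm_le_norm_of_abs_le_abs habs).trans (hwM (n+1))
  -- choose N₀ with the xhat term small
  have hN0 : ∃ N : ℕ, ∀ n, N ≤ n → (1/2:ℝ)^n * g xhat ≤ ε/4 := by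
    have ht : Tendsto (fun n : ℕ => (1/2:ℝ)^n * g xhat) atTop (𝓝 0) := by
      have := (tendsto_pow_atTop_nhds_zero_of_lt_one (by norm_num : (0:ℝ) ≤ 1/2)
        (by norm_num : (1/2:ℝ) < 1)).mul_const (g xhat)
      simpa using this
    have := (ht.eventually_lt_const (by positivity : (0:ℝ) < ε/4))
    rw [eventually_atTop] at this
    obtain ⟨N, hN⟩ := this
    exact ⟨N, fun n hn => (hN n hn).le⟩
  obtain ⟨N₀, hN₀⟩ := hN0
  -- contradiction via step A
  have hfinal := stepA hE g hg (fun k => y (N₀ + k)) (fun k => hy0 _)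
    (fun i j hij => by
      rcases lt_or_gt_of_ne hij with h | h
      · exact hydisj _ _ (by omega)
      · rw [inf_comm]; exact hydisj _ _ (by omega))
    M (fun k => hyM _)
  have hcontr : ε/4 ≤ (0:ℝ) := by
    apply ge_of_tendsto hfinal
    apply Filter.Eventually.of_forall
    intro k
    have hb1 := hgy (N₀ + k)
    have hb2 := hN₀ (N₀ + k) (by omega)
    linarith
  linarith


end WbsoAux

end AuxWbso

theorem wbso_implies_ubso_of_dual_orderContinuous {E F : Type*} [NormedAddCommGroup E] [Lattice E] [IsOrderedAddMonoid E] [HasSolidNorm E] [NormedSpace ℝ E] [CompleteSpace E]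
    [NormedAddCommGroup F] [Lattice F] [IsOrderedAddMonoid F] [HasSolidNorm F] [NormedSpace ℝ F] [CompleteSpace F]
    (hE : DualHasOrderContinuousNorm E) (T : E →L[ℝ] F) (hT : WBSO T) : UBSO T := by
  intro x hb huaw
  refine hT x ?_
  intro f
  refine WbsoAux.weaklyNull_of_pos (fun g hg => ?_) f
  obtain ⟨M, hM⟩ := hb
  exact WbsoAux.pos_tendsto hE g hg x M hM (fun u hu => huaw u hu g)
end

section
/- Let E, F, G be Banach lattices, T : F → G an unbounded Banach-Saks operator, and S : E → F a uaw-continuous operator. Then T∘S is an unbounded Banach-Saks operator. -/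
open Filter Topology MeasureTheory

theorem ubso_comp_uawContinuous {E F G : Type*} [NormedAddCommGroup E] [Lattice E] [IsOrderedAddMonoid E] [HasSolidNorm E] [NormedSpace ℝ E] [CompleteSpace E]
    [NormedAddCommGroup F] [Lattice F] [IsOrderedAddMonoid F] [HasSolidNorm F] [NormedSpace ℝ F] [CompleteSpace F]
    [NormedAddCommGroup G] [Lattice G] [IsOrderedAddMonoid G] [HasSolidNorm G] [NormedSpace ℝ G] [CompleteSpace G]
    (T : F →L[ℝ] G) (hT : UBSO T) (S : E →L[ℝ] F)
    (hS : ∀ x : ℕ → E, NormBounded x → UawNull x → UawNull (fun n => S (x n))) :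
    UBSO (T.comp S) := by
  intro x hb hu
  obtain ⟨C, hC⟩ := hb
  have hb' : NormBounded (fun n => S (x n)) :=
    ⟨‖S‖ * C, fun n => (S.le_opNorm _).trans
      (by
        have h0 : (0:ℝ) ≤ ‖S‖ := norm_nonneg _
        exact mul_le_mul_of_nonneg_left (hC n) h0)⟩
  have hu' : UawNull (fun n => S (x n)) := hS x ⟨C, hC⟩ hu
  simpa using hT (fun n => S (x n)) hb' hu'
end

section
/- A Banach lattice F has the unbounded Grothendieck property if and only if every continuous operator T : ℓ¹ → F is an unbounded Grothendieck operator. -/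
open Filter Topology MeasureTheory

lemma count_ae_all {α β : Type*} [MeasurableSpace α] {f g : α → β}
    (h : f =ᵐ[Measure.count] g) : ∀ n, f n = g n := by
  intro n
  by_contra hn
  have h0 : Measure.count {x | ¬ f x = g x} = 0 := h
  rw [Measure.count_eq_zero_iff] at h0
  exact absurd (Set.eq_empty_iff_forall_notMem.mp h0 n) (by simpa using hn)

-- delta
noncomputable def deltaL1 (m : ℕ) : ellOne :=
  indicatorConstLp 1 (measurableSet_singleton m) (by simp [Measure.count_singleton]) (1:ℝ)

lemma norm_deltaL1 (m : ℕ) : ‖deltaL1 m‖ = 1 := by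
  rw [deltaL1, norm_indicatorConstLp (by norm_num) (by norm_num)]
  simp [Measure.count_singleton]

lemma sm_nat {F : Type*} [NormedAddCommGroup F] (f : ℕ → F) : StronglyMeasurable f := by
  borelize F
  rw [stronglyMeasurable_iff_measurable_separable]
  exact ⟨measurable_from_top, (Set.countable_range f).isSeparable⟩

section Top
variable {F : Type*} [NormedAddCommGroup F] [NormedSpace ℝ F] [CompleteSpace F]

lemma integrable_smul_seq (y : ℕ → F) {C : ℝ} (hC : ∀ m, ‖y m‖ ≤ C) (a : ellOne) :
    Integrable (fun m => (a : ℕ → ℝ) m • y m) Measure.count := by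
  have ha : Integrable (fun m => (a : ℕ → ℝ) m) Measure.count :=
    L1.integrable_coeFn a
  refine Integrable.mono' (ha.norm.mul_const C) (sm_nat _).aestronglyMeasurable ?_
  refine Filter.Eventually.of_forall fun m => ?_
  rw [norm_smul]
  have h0 : (0:ℝ) ≤ ‖(a : ℕ → ℝ) m‖ := norm_nonneg _
  exact mul_le_mul_of_nonneg_left ((hC m).trans (le_refl C) |>.trans (le_refl C)) h0
    |>.trans_eq rfl

noncomputable def sumOp (y : ℕ → F) {C : ℝ} (hC : ∀ m, ‖y m‖ ≤ C) : ellOne →L[ℝ] F := by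
  refine LinearMap.mkContinuous
    { toFun := fun a => ∫ m, (a : ℕ → ℝ) m • y m ∂Measure.count
      map_add' := ?_, map_smul' := ?_ } C ?_
  · intro a b
    rw [← integral_add (integrable_smul_seq y hC a) (integrable_smul_seq y hC b)]
    refine integral_congr_ae (Filter.Eventually.of_forall fun m => ?_)
    have := count_ae_all (Lp.coeFn_add a b)
    show (a + b : ellOne) m • y m = _
    rw [this m, Pi.add_apply, add_smul]
  · intro c a
    rw [← integral_smul]
    refine integral_congr_ae (Filter.Eventually.of_forall fun m => ?_)
    have := count_ae_all (Lp.coeFn_smul c a)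
    show (c • a : ellOne) m • y m = _
    rw [this m, Pi.smul_apply, smul_assoc]
    rfl
  · intro a
    calc ‖∫ m, (a : ℕ → ℝ) m • y m ∂Measure.count‖
        ≤ ∫ m, ‖(a : ℕ → ℝ) m • y m‖ ∂Measure.count :=
          norm_integral_le_integral_norm _
      _ ≤ ∫ m, ‖(a : ℕ → ℝ) m‖ * C ∂Measure.count := by
          refine integral_mono_of_nonneg (Filter.Eventually.of_forall fun m => norm_nonneg _)
            ((L1.integrable_coeFn a).norm.mul_const C)
            (Filter.Eventually.of_forall fun m => ?_)
          show ‖(a : ℕ → ℝ) m • y m‖ ≤ _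
          rw [norm_smul]
          exact mul_le_mul_of_nonneg_left (hC m) (norm_nonneg _)
      _ = C * ‖a‖ := by
          rw [L1.norm_eq_integral_norm, ← integral_const_mul]
          exact integral_congr_ae (Filter.Eventually.of_forall fun m => mul_comm _ _)

lemma sumOp_delta (y : ℕ → F) {C : ℝ} (hC : ∀ m, ‖y m‖ ≤ C) (m : ℕ) :
    sumOp y hC (deltaL1 m) = y m := by
  have hcoe := count_ae_all (indicatorConstLp_coeFn (p := 1) (μ := Measure.count)
    (hs := measurableSet_singleton m) (hμs := by simp [Measure.count_singleton]) (c := (1:ℝ)))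
  show ∫ k, (deltaL1 m : ℕ → ℝ) k • y k ∂Measure.count = y m
  have : ∀ k, (deltaL1 m : ℕ → ℝ) k • y k = Set.indicator {m} (fun k => y k) k := by
    intro k
    rw [deltaL1, hcoe k]
    by_cases hk : k ∈ ({m} : Set ℕ) <;> simp [Set.indicator_of_mem, hk]
  rw [integral_congr_ae (Filter.Eventually.of_forall this)]
  rw [integral_indicator (measurableSet_singleton m), integral_singleton]
  simp [Measure.count_singleton]
end Top

noncomputable def natU : Ultrafilter ℕ := Ultrafilter.of atTop

lemma natU_le_atTop : (natU : Filter ℕ) ≤ atTop := Ultrafilter.of_le _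

lemma tendsto_natU_of_bounded {h : ℕ → ℝ} {C : ℝ} (hb : ∀ m, |h m| ≤ C) :
    ∃ a, |a| ≤ C ∧ Tendsto h (natU : Filter ℕ) (𝓝 a) := by
  have hle : (natU.map h : Filter ℝ) ≤ 𝓟 (Set.Icc (-C) C) := by
    rw [Filter.le_principal_iff]
    exact Filter.mem_map.mpr (Filter.Eventually.of_forall fun m => abs_le.mp (hb m))
  obtain ⟨a, ha, hta⟩ := (isCompact_Icc (a := -C) (b := C)).ultrafilter_le_nhds (natU.map h) hle
  exact ⟨a, abs_le.mpr ha, hta⟩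

lemma limUnder_natU_eq {h : ℕ → ℝ} {a : ℝ} (ht : Tendsto h (natU : Filter ℕ) (𝓝 a)) :
    limUnder (natU : Filter ℕ) h = a :=
  ht.limUnder_eq

/-- generalized limit functional on the dual of ℓ¹, evaluating along δ's. -/
noncomputable def genLim : (ellOne →L[ℝ] ℝ) →L[ℝ] ℝ := by
  have key : ∀ g : ellOne →L[ℝ] ℝ, Tendsto (fun m => g (deltaL1 m)) (natU : Filter ℕ)
      (𝓝 (limUnder (natU : Filter ℕ) (fun m => g (deltaL1 m)))) := by
    intro g
    obtain ⟨a, _, hta⟩ := tendsto_natU_of_bounded (h := fun m => g (deltaL1 m)) (C := ‖g‖)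
      (fun m => by
        have := g.le_opNorm (deltaL1 m)
        rw [norm_deltaL1] at this
        simpa using this)
    rwa [limUnder_natU_eq hta]
  refine LinearMap.mkContinuous
    { toFun := fun g => limUnder (natU : Filter ℕ) (fun m => g (deltaL1 m))
      map_add' := fun g₁ g₂ => limUnder_natU_eq (by simpa using (key g₁).add (key g₂))
      map_smul' := fun c g => limUnder_natU_eq (by simpa using (key g).const_mul c) } 1 ?_
  intro g
  rw [one_mul]
  show ‖limUnder (natU : Filter ℕ) (fun m => g (deltaL1 m))‖ ≤ ‖g‖
  rw [Real.norm_eq_abs]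
  refine le_of_tendsto (key g).abs (Filter.Eventually.of_forall fun m => ?_)
  have := g.le_opNorm (deltaL1 m)
  rw [norm_deltaL1] at this
  simpa using this

lemma genLim_eq_of_tendsto {g : ellOne →L[ℝ] ℝ} {a : ℝ}
    (ht : Tendsto (fun m => g (deltaL1 m)) atTop (𝓝 a)) :
    genLim g = a :=
  limUnder_natU_eq (ht.mono_left natU_le_atTop)

section Helly
variable {F : Type*} [NormedAddCommGroup F] [NormedSpace ℝ F]

lemma helly (Φ : (F →L[ℝ] ℝ) →L[ℝ] ℝ) (k : ℕ) (g : Fin k → F →L[ℝ] ℝ) {ε : ℝ} (hε : 0 < ε) :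
    ∃ y : F, ‖y‖ ≤ ‖Φ‖ + 1 ∧ ∀ j, |g j y - Φ (g j)| < ε := by
  set r : ℝ := ‖Φ‖ + 1 with hr
  have hr0 : 0 < r := by positivity
  set G : F →L[ℝ] (Fin k → ℝ) := ContinuousLinearMap.pi g with hG
  set A : Set (Fin k → ℝ) := G '' Metric.closedBall 0 r with hA
  set c : Fin k → ℝ := fun j => Φ (g j) with hc
  have hcS : c ∈ closure A := by
    by_contra hcS
    obtain ⟨φ, u, hlt, hu⟩ := geometric_hahn_banach_closed_point
      ((convex_closedBall (0:F) r).linear_image G.toLinearMap).closure isClosed_closure hcS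
    -- φ as a sum of coordinates
    have hφ : ∀ v : Fin k → ℝ, φ v = ∑ j, v j * φ (Pi.single j 1) := by
      intro v
      conv_lhs => rw [← Finset.univ_sum_single v]
      rw [map_sum]
      refine Finset.sum_congr rfl fun j _ => ?_
      have : Pi.single j (v j) = v j • (Pi.single j 1 : Fin k → ℝ) := by
        rw [← Pi.single_smul, smul_eq_mul, mul_one]
      rw [this, _root_.map_smul, smul_eq_mul]
    set h : F →L[ℝ] ℝ := ∑ j, φ (Pi.single j 1) • g j with hh
    have hhy : ∀ y : F, h y = φ (G y) := by
      intro y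
      rw [hφ (G y)]
      simp only [hh, ContinuousLinearMap.sum_apply, ContinuousLinearMap.coe_smul',
        Pi.smul_apply, smul_eq_mul, hG, ContinuousLinearMap.pi_apply]
      exact Finset.sum_congr rfl fun j _ => mul_comm _ _
    have hu0 : 0 < u := by
      have h0 : (0 : Fin k → ℝ) ∈ A :=
        ⟨0, Metric.mem_closedBall_self hr0.le, map_zero G⟩
      have := hlt 0 (subset_closure h0)
      simpa using this
    have hball : ∀ y : F, ‖y‖ ≤ r → h y < u := by
      intro y hy
      rw [hhy]
      exact hlt _ (subset_closure ⟨y, by simpa [Metric.mem_closedBall, dist_eq_norm] using hy, rfl⟩)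
    have hnorm : ‖h‖ ≤ u / r := by
      refine ContinuousLinearMap.opNorm_le_bound h (by positivity) fun y => ?_
      rcases eq_or_ne y 0 with rfl | hy0
      · simp
      · have hny : 0 < ‖y‖ := norm_pos_iff.mpr hy0
        have h1 : h ((r / ‖y‖) • y) < u := by
          refine hball _ ?_
          rw [norm_smul, norm_div, Real.norm_eq_abs, abs_of_pos hr0, Real.norm_eq_abs,
            abs_of_pos hny, div_mul_cancel₀ _ hny.ne']
        have h2 : h ((r / ‖y‖) • (-y)) < u := by
          refine hball _ ?_
          rw [norm_smul, norm_neg, norm_div, Real.norm_eq_abs, abs_of_pos hr0, Real.norm_eq_abs,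
            abs_of_pos hny, div_mul_cancel₀ _ hny.ne']
        rw [_root_.map_smul, smul_eq_mul] at h1
        rw [_root_.map_smul, map_neg, smul_eq_mul, mul_neg] at h2
        have hid : (‖y‖ / r) * (r / ‖y‖) = 1 := by field_simp
        have e1 : h y < u / r * ‖y‖ := by
          calc h y = (‖y‖ / r) * ((r / ‖y‖) * h y) := by rw [← mul_assoc, hid, one_mul]
            _ < (‖y‖ / r) * u :=
              mul_lt_mul_of_pos_left h1 (show 0 < ‖y‖ / r by positivity)
            _ = u / r * ‖y‖ := by ring
        have e2 : -(h y) < u / r * ‖y‖ := by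
          calc -(h y) = (‖y‖ / r) * ((r / ‖y‖) * -(h y)) := by rw [← mul_assoc, hid, one_mul]
            _ = (‖y‖ / r) * -((r / ‖y‖) * h y) := by ring
            _ < (‖y‖ / r) * u :=
              mul_lt_mul_of_pos_left h2 (show 0 < ‖y‖ / r by positivity)
            _ = u / r * ‖y‖ := by ring
        rw [Real.norm_eq_abs]
        exact abs_le.mpr ⟨by linarith, e1.le⟩
    have hφc : φ c = Φ h := by
      rw [hφ c, hh, map_sum]
      refine Finset.sum_congr rfl fun j _ => ?_
      rw [_root_.map_smul, smul_eq_mul, hc, mul_comm]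
    have : Φ h ≤ ‖Φ‖ * ‖h‖ := le_trans (le_abs_self _) (Φ.le_opNorm h)
    have hfin : ‖Φ‖ * ‖h‖ < u := by
      have h1 : ‖Φ‖ * ‖h‖ ≤ ‖Φ‖ * (u / r) :=
        mul_le_mul_of_nonneg_left hnorm (norm_nonneg Φ)
      have h2 : ‖Φ‖ * (u / r) < r * (u / r) :=
        mul_lt_mul_of_pos_right (by rw [hr]; linarith) (by positivity)
      rw [mul_comm r (u / r), div_mul_cancel₀ _ hr0.ne'] at h2
      linarith
    rw [hφc] at hu
    linarith
  obtain ⟨a, haA, hdist⟩ := Metric.mem_closure_iff.mp hcS ε hε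
  obtain ⟨y, hy, rfl⟩ := haA
  refine ⟨y, by simpa [Metric.mem_closedBall, dist_eq_norm] using hy, fun j => ?_⟩
  have := norm_le_pi_norm (G y - c) j
  rw [dist_comm, dist_eq_norm] at hdist
  calc |g j y - Φ (g j)| = ‖(G y - c) j‖ := by
        simp [hG, hc, ContinuousLinearMap.pi_apply, Real.norm_eq_abs]
    _ ≤ ‖G y - c‖ := norm_le_pi_norm _ j
    _ < ε := hdist
end Helly

/-- Pre-composition with `T` as a continuous linear map on duals. -/
noncomputable def precompOp {E F : Type*} [NormedAddCommGroup E] [NormedSpace ℝ E]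
    [NormedAddCommGroup F] [NormedSpace ℝ F] (T : E →L[ℝ] F) :
    (F →L[ℝ] ℝ) →L[ℝ] (E →L[ℝ] ℝ) :=
  LinearMap.mkContinuous
    { toFun := fun g => g.comp T
      map_add' := fun g₁ g₂ => by ext x; simp
      map_smul' := fun c g => by ext x; simp } ‖T‖ fun g => by
    rw [mul_comm]; exact ContinuousLinearMap.opNorm_comp_le g T

theorem ugp_iff_forall_ugo {F : Type*} [NormedAddCommGroup F] [Lattice F] [IsOrderedAddMonoid F] [HasSolidNorm F] [NormedSpace ℝ F] [CompleteSpace F] :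
    UnboundedGrothendieckProp F ↔ ∀ T : ellOne →L[ℝ] F, UGO T := by
  constructor
  · intro hUGP T f hb huaw Ψ
    exact hUGP f hb huaw (Ψ.comp (precompOp T))
  · intro H f hb huaw Φ
    by_contra hcon
    have hfreq : ∃ ε > 0, ∃ᶠ n in atTop, ε ≤ |Φ (f n)| := by
      by_contra hno
      push_neg at hno
      apply hcon
      rw [Metric.tendsto_atTop]
      intro ε hε
      have := hno ε hε
      have : ∀ᶠ n in atTop, ¬ ε ≤ |Φ (f n)| := this.mono fun n hn => not_le.mpr hn
      rw [Filter.eventually_atTop] at this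
      obtain ⟨N, hN⟩ := this
      refine ⟨N, fun n hn => ?_⟩
      have := hN n hn
      push_neg at this
      simpa [Real.dist_eq] using this
    obtain ⟨ε, hε, hfr⟩ := hfreq
    obtain ⟨φ, hφmono, hφ⟩ := Filter.extraction_of_frequently_atTop hfr
    -- Helly approximations
    have hch : ∀ k : ℕ, ∃ y : F, ‖y‖ ≤ ‖Φ‖ + 1 ∧
        ∀ j : Fin (k + 1), |f (φ j) y - Φ (f (φ j))| < 1 / (k + 1) := by
      intro k
      exact helly Φ (k + 1) (fun j => f (φ j)) (by positivity)
    choose y hy1 hy2 using hch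
    set T : ellOne →L[ℝ] F := sumOp y hy1 with hT
    have hUGO := H T f hb huaw genLim
    -- identify the values along the subsequence
    have hval : ∀ k : ℕ, genLim ((f (φ k)).comp T) = Φ (f (φ k)) := by
      intro k
      apply genLim_eq_of_tendsto
      have hTy : ∀ m, ((f (φ k)).comp T) (deltaL1 m) = f (φ k) (y m) := fun m =>
        congrArg (f (φ k)) (sumOp_delta y hy1 m)
      rw [Metric.tendsto_atTop]
      intro δ hδ
      obtain ⟨N, hN⟩ := exists_nat_one_div_lt hδ
      refine ⟨max k N, fun m hm => ?_⟩
      have hmk : k < m + 1 := Nat.lt_succ_of_le (le_trans (le_max_left _ _) hm)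
      have hj := hy2 m ⟨k, hmk⟩
      simp only [Fin.val_mk] at hj
      have h1 : (1 : ℝ) / (m + 1) ≤ 1 / (N + 1) := by
        apply one_div_le_one_div_of_le (by positivity)
        have : (N : ℝ) ≤ m := by exact_mod_cast le_trans (le_max_right _ _) hm
        linarith
      rw [hTy, Real.dist_eq]
      calc |f (φ k) (y m) - Φ (f (φ k))| < 1 / (m + 1) := hj
        _ ≤ 1 / (N + 1) := h1
        _ < δ := by exact_mod_cast hN
    have hsub : Tendsto (fun k => Φ (f (φ k))) atTop (𝓝 0) := by
      have := hUGO.comp hφmono.tendsto_atTop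
      refine this.congr fun k => ?_
      exact hval k
    rw [Metric.tendsto_atTop] at hsub
    obtain ⟨N, hN⟩ := hsub ε hε
    have := hN N le_rfl
    rw [Real.dist_eq, sub_zero] at this
    exact absurd (hφ N) (not_le.mpr this)
end
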